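/- arXiv:1408.5069 — 3 statements merged into one kernel-verified Lean document; each statement's English description precedes it below -/
import Mathlib

section
/- Let L and d be positive integers with L ≥ 3d − 2. Let i, j, k be independent random variables, each uniformly distributed on ℤ/Lℤ, and let A, B, C be the corresponding cyclic intervals {i,…,i+d−1}, {j,…,j+d−1}, {k,…,k+d−1} of length d in ℤ/Lℤ. Then the probability that the three intervals pairwise intersect, i.e. P(A ∩ B ≠ ∅ and B ∩ C ≠ ∅ and A ∩ C ≠ ∅), equals (3d² − 3d + 1)/L². -/
/-!
Two cyclic intervals of length `d` starting at `s` and `t` meet iff `t - s` is the residue of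
an integer in `(-d, d)`. The event is invariant under translating all three starting points, so
its probability is `L⁻²` times the number of offset pairs `(x, y) = (j - i, k - i)` such that
`x`, `y` and `y - x` are all such residues. Since `L ≥ 3d - 2`, these pairs lift uniquely to the
lattice points of the hexagon `|x|, |y|, |y - x| < d`: the lift of `y - x` is forced because it
differs from any lift of its residue in `(-d, d)` by at most `3d - 3 < L`. Apart from the origin,
the hexagon is tiled by three copies of a `(d - 1) × d` parallelogram, permuted by its order-3
symmetry `(x, y) ↦ (y - x, -x)`, so it has `3d(d - 1) + 1` points.
-/

open MeasureTheory

noncomputable section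

instance (L : ℕ) : MeasurableSpace (ZMod L) := ⊤

/-- The cyclic interval `{s, s+1, …, s+d-1}` in `ℤ/Lℤ`. -/
def cycInterval (L : ℕ) (s : ZMod L) (d : ℕ) : Finset (ZMod L) :=
  (Finset.range d).image (fun t : ℕ => s + (t : ZMod L))

open Finset
open scoped ENNReal

instance (L : ℕ) : MeasurableSingletonClass (ZMod L) := ⟨fun _ => trivial⟩

theorem pi_uniformOfFintype_apply {ι α : Type*} [Fintype ι] [Fintype α] [Nonempty α]
    [MeasurableSpace α] [MeasurableSingletonClass α] (s : Set (ι → α)) :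
    Measure.pi (fun _ : ι => (PMF.uniformOfFintype α).toMeasure) s =
      s.ncard / (Fintype.card α : ℝ≥0∞) ^ Fintype.card ι := by
  classical
  obtain ⟨F, rfl⟩ := s.toFinite.exists_finset_coe
  rw [← sum_measure_singleton, Set.ncard_coe_finset]
  simp only [Measure.pi_singleton, PMF.toMeasure_apply_singleton _ _ (measurableSet_singleton _),
    PMF.uniformOfFintype_apply, prod_const, card_univ, sum_const, nsmul_eq_mul]
  rw [div_eq_mul_inv, ENNReal.inv_pow]

theorem ncard_setOf_fin_three_of_sub_mem {G : Type*} [AddCommGroup G] [Finite G]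
    {P : (Fin 3 → G) → Prop} {S : Set (G × G)}
    (hP : ∀ a, P a ↔ (a 1 - a 0, a 2 - a 0) ∈ S) :
    {a | P a}.ncard = Nat.card G * S.ncard := by
  let e : (Fin 3 → G) ≃ G × G × G :=
    { toFun := fun a => (a 0, a 1 - a 0, a 2 - a 0)
      invFun := fun p => ![p.1, p.1 + p.2.1, p.1 + p.2.2]
      left_inv := fun a => by ext i; fin_cases i <;> simp
      right_inv := fun p => by simp }
  have hpre : {a | P a} = e ⁻¹' (Set.univ ×ˢ S) := by
    ext a
    simp [e, hP]
  rw [hpre, Set.ncard_preimage_of_injective_subset_range e.injective (by simp),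
    Set.ncard_prod, Set.ncard_univ]

def overlapOffsets (L d : ℕ) : Set (ZMod L) := Int.cast '' Set.Ioo (-(d : ℤ)) d

theorem cycInterval_inter_nonempty_iff {L d : ℕ} (s t : ZMod L) :
    (cycInterval L s d ∩ cycInterval L t d).Nonempty ↔ t - s ∈ overlapOffsets L d := by
  simp only [cycInterval, overlapOffsets, Finset.Nonempty, mem_inter, mem_image, mem_range,
    Set.mem_image, Set.mem_Ioo]
  constructor
  · rintro ⟨x, ⟨m, hm, rfl⟩, n, hn, h⟩
    refine ⟨m - n, by omega, ?_⟩
    push_cast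
    linear_combination -h
  · rintro ⟨z, hz, hzts⟩
    refine ⟨s + z.toNat, ⟨z.toNat, by omega, rfl⟩, (-z).toNat, by omega, ?_⟩
    have hsplit : (((z.toNat : ℤ) - ((-z).toNat : ℤ) : ℤ) : ZMod L) = z := by
      congr 1
      omega
    push_cast at hsplit
    linear_combination -hsplit - hzts

def tripleOverlapOffsets (L d : ℕ) : Set (ZMod L × ZMod L) :=
  {p | p.1 ∈ overlapOffsets L d ∧ p.2 - p.1 ∈ overlapOffsets L d ∧
    p.2 ∈ overlapOffsets L d}

def hexagon (d : ℕ) : Finset (ℤ × ℤ) :=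
  {p ∈ Ioo (-(d : ℤ)) d ×ˢ Ioo (-(d : ℤ)) d | p.2 - p.1 ∈ Ioo (-(d : ℤ)) d}

theorem mem_hexagon {d : ℕ} {p : ℤ × ℤ} :
    p ∈ hexagon d ↔ p.1 ∈ Ioo (-(d : ℤ)) d ∧ p.2 ∈ Ioo (-(d : ℤ)) d ∧
      p.2 - p.1 ∈ Ioo (-(d : ℤ)) d := by
  rw [hexagon, mem_filter, mem_product, and_assoc]

def hexagonRhombus (d : ℕ) : Finset (ℤ × ℤ) := Ioo 0 (d : ℤ) ×ˢ Ico 0 (d : ℤ)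

theorem mem_hexagonRhombus {d : ℕ} {p : ℤ × ℤ} :
    p ∈ hexagonRhombus d ↔ 0 < p.1 ∧ p.1 < d ∧ 0 ≤ p.2 ∧ p.2 < d := by
  simp [hexagonRhombus, and_assoc]

theorem card_hexagonRhombus (d : ℕ) : #(hexagonRhombus d) = (d - 1) * d := by
  simp [hexagonRhombus, Int.card_Ioo, Int.card_Ico]

def hexagonRotation : ℤ × ℤ ≃ ℤ × ℤ where
  toFun p := (p.2 - p.1, -p.1)
  invFun p := (-p.2, p.1 - p.2)
  left_inv p := by ext <;> simp
  right_inv p := by ext <;> simp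

theorem mem_map_hexagonRotation {s : Finset (ℤ × ℤ)} {p : ℤ × ℤ} :
    p ∈ s.map hexagonRotation.toEmbedding ↔ (-p.2, p.1 - p.2) ∈ s :=
  mem_map_equiv

theorem hexagon_eq_insert_rhombi {d : ℕ} (hd : 0 < d) :
    hexagon d = insert 0 (hexagonRhombus d ∪
      (hexagonRhombus d).map hexagonRotation.toEmbedding ∪
      ((hexagonRhombus d).map hexagonRotation.toEmbedding).map hexagonRotation.toEmbedding) := by
  ext p
  simp only [mem_hexagon, mem_Ioo, mem_insert, mem_union, mem_map_hexagonRotation,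
    mem_hexagonRhombus, Prod.ext_iff, Prod.fst_zero, Prod.snd_zero]
  omega

theorem card_hexagon {d : ℕ} (hd : 0 < d) : #(hexagon d) = 3 * ((d - 1) * d) + 1 := by
  set R := hexagonRhombus d
  set ρ := hexagonRotation.toEmbedding
  have h₁ : Disjoint R (R.map ρ) := disjoint_left.2 fun p => by
    simp only [R, ρ, mem_map_hexagonRotation, mem_hexagonRhombus]
    omega
  have h₂ : Disjoint (R ∪ R.map ρ) ((R.map ρ).map ρ) := disjoint_left.2 fun p => by
    simp only [R, ρ, mem_union, mem_map_hexagonRotation, mem_hexagonRhombus]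
    omega
  have h₀ : (0 : ℤ × ℤ) ∉ R ∪ R.map ρ ∪ (R.map ρ).map ρ := by
    simp only [R, ρ, mem_union, mem_map_hexagonRotation, mem_hexagonRhombus, Prod.fst_zero,
      Prod.snd_zero]
    omega
  rw [hexagon_eq_insert_rhombi hd, card_insert_of_notMem h₀, card_union_of_disjoint h₂,
    card_union_of_disjoint h₁, card_map, card_map, card_map, card_hexagonRhombus]
  ring

theorem eq_of_intCast_eq_of_abs_sub_lt {L : ℕ} {x y : ℤ} (h : (x : ZMod L) = y)
    (hxy : |x - y| < L) : x = y :=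
  sub_eq_zero.1 <|
    Int.eq_zero_of_abs_lt_dvd ((ZMod.intCast_eq_intCast_iff_dvd_sub y x L).1 h.symm) hxy

theorem tripleOverlapOffsets_eq_image_hexagon {L d : ℕ} (hdL : 3 * d - 2 ≤ L) :
    tripleOverlapOffsets L d = Prod.map Int.cast Int.cast '' ↑(hexagon d) := by
  ext ⟨u, v⟩
  simp only [tripleOverlapOffsets, overlapOffsets, Set.mem_ofPred_eq, Set.mem_image,
    Set.mem_Ioo, mem_coe, mem_hexagon, mem_Ioo, Prod.exists, Prod.map_apply, Prod.mk.injEq]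
  constructor
  · rintro ⟨⟨x, hx, rfl⟩, ⟨z, hz, hzyx⟩, ⟨y, hy, rfl⟩⟩
    have hyx : y - x = z := eq_of_intCast_eq_of_abs_sub_lt (by push_cast; exact hzyx.symm)
      (abs_lt.2 ⟨by omega, by omega⟩)
    exact ⟨x, y, ⟨hx, hy, by omega⟩, rfl, rfl⟩
  · rintro ⟨x, y, ⟨hx, hy, hyx⟩, rfl, rfl⟩
    exact ⟨⟨x, hx, rfl⟩, ⟨y - x, hyx, by push_cast; rfl⟩, ⟨y, hy, rfl⟩⟩

theorem ncard_tripleOverlapOffsets {L d : ℕ} (hdL : 3 * d - 2 ≤ L) :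
    (tripleOverlapOffsets L d).ncard = #(hexagon d) := by
  rw [tripleOverlapOffsets_eq_image_hexagon hdL, Set.InjOn.ncard_image, Set.ncard_coe_finset]
  rintro ⟨x, y⟩ hxy ⟨x', y'⟩ hxy' h
  simp only [mem_coe, mem_hexagon, mem_Ioo] at hxy hxy'
  simp only [Prod.map_apply, Prod.mk.injEq] at h
  exact Prod.ext (eq_of_intCast_eq_of_abs_sub_lt h.1 (abs_lt.2 ⟨by omega, by omega⟩))
    (eq_of_intCast_eq_of_abs_sub_lt h.2 (abs_lt.2 ⟨by omega, by omega⟩))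

/-- For three independent uniform starting slots in `ℤ/Lℤ` with `L ≥ 3d - 2`,
the probability that the three cyclic awake intervals of length `d` pairwise intersect is
`(3d² - 3d + 1)/L²`. -/
theorem stmt_13 (L d : ℕ) [NeZero L] (hd : 0 < d) (hdL : 3 * d - 2 ≤ L) :
    (Measure.pi fun _ : Fin 3 => (PMF.uniformOfFintype (ZMod L)).toMeasure)
      {a : Fin 3 → ZMod L |
        (cycInterval L (a 0) d ∩ cycInterval L (a 1) d).Nonempty ∧
        (cycInterval L (a 1) d ∩ cycInterval L (a 2) d).Nonempty ∧
        (cycInterval L (a 0) d ∩ cycInterval L (a 2) d).Nonempty}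
      = ENNReal.ofReal ((3 * (d : ℝ) ^ 2 - 3 * d + 1) / (L : ℝ) ^ 2) := by
  have hL : 0 < L := Nat.pos_of_neZero L
  have hcount : 3 * (d : ℝ) ^ 2 - 3 * d + 1 = ((3 * ((d - 1) * d) + 1 : ℕ) : ℝ) := by
    push_cast [Nat.cast_pred hd]
    ring
  rw [pi_uniformOfFintype_apply,
    ncard_setOf_fin_three_of_sub_mem (S := tripleOverlapOffsets L d) fun a => by
      simp only [tripleOverlapOffsets, Set.mem_ofPred_eq, cycInterval_inter_nonempty_iff,
        sub_sub_sub_cancel_right],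
    ncard_tripleOverlapOffsets hdL, card_hexagon hd, ZMod.card, Fintype.card_fin, Nat.card_zmod,
    hcount, ENNReal.ofReal_div_of_pos (by positivity), ENNReal.ofReal_natCast,
    ENNReal.ofReal_pow (Nat.cast_nonneg L), ENNReal.ofReal_natCast, Nat.cast_mul, pow_succ',
    ENNReal.mul_div_mul_left _ _ (by positivity) (ENNReal.natCast_ne_top L)]
end
end

section
/- Let L, d, k be positive integers with d ≤ L, and let A_1,…,A_k be independent random sets, each uniformly distributed among all d-element subsets of {0,1,…,L−1}. Then the probability that every pair of the schedules overlaps, i.e. P(A_i ∩ A_j ≠ ∅ for all 1 ≤ i < j ≤ k), is at least 1 − (k(k+1)/2)·e^{−d²/L}. -/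
/-!
By the union bound over the `k.choose 2` unordered pairs `{i, j}` it suffices to bound the
probability that `A i` and `A j` are disjoint. The two coordinates are independent, so
conditioning on `A i = S` with `#S = d` leaves `A j` uniform among the `d`-subsets, and it avoids
`S` with probability `C(L - d, d) / C(L, d) = ∏_{t < d} (L - d - t) / (L - t) ≤ (1 - d / L) ^ d`,
which is at most `e^{-d²/L}` since `1 - x ≤ e^{-x}`.
-/

open MeasureTheory

noncomputable section

instance (L : ℕ) : MeasurableSpace (Finset (Fin L)) := ⊤

open ProbabilityTheory Finset

theorem cast_choose_sub_div_choose_le_one_sub_div_pow {L m : ℕ} (hm : m ≤ L) (d : ℕ) :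
    ((L - m).choose d : ℝ) / L.choose d ≤ (1 - m / L) ^ d := by
  have hmL : (m : ℝ) / L ≤ 1 := div_le_one_of_le₀ (by exact_mod_cast hm) (Nat.cast_nonneg L)
  have hfactor : ∀ i : ℕ, ((L - m - i : ℕ) : ℝ) ≤ (1 - m / L) * ((L - i : ℕ) : ℝ) := by
    intro i
    rcases le_or_gt (i + m) L with him | him
    · rcases Nat.eq_zero_or_pos L with rfl | hL
      · simp_all
      · have hexpand : (1 - m / L) * ((L : ℝ) - i) = L - m - i + m * i / L := by
          field_simp
          ring
        rw [Nat.cast_sub (by omega), Nat.cast_sub hm, Nat.cast_sub (by omega), hexpand]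
        linarith [show 0 ≤ (m : ℝ) * i / L by positivity]
    · rw [Nat.sub_sub, Nat.sub_eq_zero_of_le (by omega), Nat.cast_zero]
      exact mul_nonneg (by linarith) (Nat.cast_nonneg _)
  have hdesc : ((L - m).descFactorial d : ℝ) ≤ (1 - m / L) ^ d * L.descFactorial d := by
    simp only [Nat.descFactorial_eq_prod_range, Nat.cast_prod]
    calc ∏ i ∈ range d, ((L - m - i : ℕ) : ℝ)
        ≤ ∏ i ∈ range d, (1 - m / L) * ((L - i : ℕ) : ℝ) :=
          prod_le_prod (fun _ _ ↦ Nat.cast_nonneg _) fun i _ ↦ hfactor i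
      _ = (1 - m / L) ^ d * ∏ i ∈ range d, ((L - i : ℕ) : ℝ) := by
          rw [prod_mul_distrib, prod_const, card_range]
  calc ((L - m).choose d : ℝ) / L.choose d
      = ((L - m).descFactorial d : ℝ) / L.descFactorial d := by
        simp only [Nat.descFactorial_eq_factorial_mul_choose, Nat.cast_mul]
        rw [mul_div_mul_left _ _ (by positivity)]
    _ ≤ (1 - m / L) ^ d :=
        div_le_of_le_mul₀ (Nat.cast_nonneg _) (pow_nonneg (by linarith) d) hdesc

theorem cast_choose_sub_div_choose_le_exp {L m : ℕ} (hm : m ≤ L) (d : ℕ) :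
    ((L - m).choose d : ℝ) / L.choose d ≤ Real.exp (-(m * d) / L) :=
  calc ((L - m).choose d : ℝ) / L.choose d ≤ (1 - m / L) ^ d :=
        cast_choose_sub_div_choose_le_one_sub_div_pow hm d
    _ ≤ Real.exp (-(m / L)) ^ d :=
        pow_le_pow_left₀ (sub_nonneg.2 (div_le_one_of_le₀ (by exact_mod_cast hm)
          (Nat.cast_nonneg L))) (Real.one_sub_le_exp_neg _) d
    _ = Real.exp (-(m * d) / L) := by rw [← Real.exp_nat_mul]; ring_nf

theorem filter_powersetCard_disjoint {α : Type*} [Fintype α] [DecidableEq α] (S : Finset α)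
    (d : ℕ) : {T ∈ (univ : Finset α).powersetCard d | Disjoint S T} = Sᶜ.powersetCard d := by
  ext T
  simp [mem_powersetCard, subset_compl_iff_disjoint_left, and_comm]

section UniformSubset

variable {α : Type*} [Fintype α] [MeasurableSpace (Finset α)]
  [DiscreteMeasurableSpace (Finset α)] {d : ℕ} (hne : ((univ : Finset α).powersetCard d).Nonempty)

theorem toMeasure_uniformOfFinset_powersetCard_disjoint (S : Finset α) :
    (PMF.uniformOfFinset _ hne).toMeasure {T | Disjoint S T}
      = (Fintype.card α - #S).choose d / (Fintype.card α).choose d := by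
  classical
  rw [PMF.toMeasure_uniformOfFinset_apply hne _ MeasurableSet.of_discrete]
  simp only [Set.mem_ofPred_eq]
  rw [filter_powersetCard_disjoint, card_powersetCard, card_powersetCard, card_compl, card_univ]

theorem ae_card_eq_uniformOfFinset_powersetCard :
    ∀ᵐ S ∂(PMF.uniformOfFinset _ hne).toMeasure, #S = d := by
  rw [ae_iff, PMF.toMeasure_apply_eq_zero_iff _ MeasurableSet.of_discrete,
    PMF.support_uniformOfFinset]
  exact Set.disjoint_left.2 fun S hS hS' ↦ hS' (mem_powersetCard.1 hS).2

theorem measureReal_pi_uniformOfFinset_powersetCard_disjoint {ι : Type*} [Fintype ι]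
    {i j : ι} (hij : i ≠ j) :
    (Measure.pi fun _ : ι ↦ (PMF.uniformOfFinset _ hne).toMeasure).real
        {A | Disjoint (A i) (A j)}
      = ((Fintype.card α - d).choose d : ℝ) / (Fintype.card α).choose d := by
  set ν := (PMF.uniformOfFinset _ hne).toMeasure
  set μ := Measure.pi fun _ : ι ↦ ν
  have hindep : IndepFun (fun A : ι → Finset α ↦ A i) (fun A ↦ A j) μ :=
    (iIndepFun_pi (X := fun _ ↦ id) fun _ ↦ aemeasurable_id).indepFun hij
  have hmap : μ.map (fun A ↦ (A i, A j)) = ν.prod ν := by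
    rw [hindep.map_prod_eq_prod_map_map (measurable_pi_apply i).aemeasurable
      (measurable_pi_apply j).aemeasurable, (measurePreserving_eval _ i).map_eq,
      (measurePreserving_eval _ j).map_eq]
  have hpair : μ {A | Disjoint (A i) (A j)}
      = ((Fintype.card α - d).choose d : ENNReal) / (Fintype.card α).choose d := by
    calc μ {A | Disjoint (A i) (A j)}
        = ν.prod ν {p | Disjoint p.1 p.2} := by
          rw [← hmap, Measure.map_apply (by fun_prop) MeasurableSet.of_discrete]; rfl
      _ = ∫⁻ S, ν {T | Disjoint S T} ∂ν := Measure.prod_apply MeasurableSet.of_discrete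
      _ = ∫⁻ _, ((Fintype.card α - d).choose d : ENNReal) / (Fintype.card α).choose d ∂ν := by
          refine lintegral_congr_ae ?_
          filter_upwards [ae_card_eq_uniformOfFinset_powersetCard hne] with S hS
          rw [toMeasure_uniformOfFinset_powersetCard_disjoint, hS]
      _ = _ := by rw [lintegral_const, measure_univ, mul_one]
  rw [measureReal_def, hpair, ENNReal.toReal_div]
  simp

end UniformSubset

theorem measureReal_iUnion_ne_le_choose_two {Ω ι : Type*} [MeasurableSpace Ω] [Fintype ι]
    (μ : Measure Ω) (E : ι → ι → Set Ω) (hE : ∀ i j, E i j = E j i) {c : ℝ}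
    (hc : ∀ i j, i ≠ j → μ.real (E i j) ≤ c) :
    μ.real (⋃ (i) (j) (_ : i ≠ j), E i j) ≤ (Fintype.card ι).choose 2 * c := by
  classical
  set F : Sym2 ι → Set Ω := Sym2.lift ⟨E, hE⟩
  set pairs := (univ : Finset ι).offDiag.image Sym2.mk.uncurry
  have hcover : (⋃ (i) (j) (_ : i ≠ j), E i j) = ⋃ e ∈ pairs, F e := by
    ext ω
    simp [pairs, F]
  calc μ.real (⋃ (i) (j) (_ : i ≠ j), E i j)
      = μ.real (⋃ e ∈ pairs, F e) := by rw [hcover]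
    _ ≤ ∑ e ∈ pairs, μ.real (F e) := measureReal_biUnion_finset_le _ _
    _ ≤ ∑ _e ∈ pairs, c := by
        refine sum_le_sum fun e he ↦ ?_
        obtain ⟨⟨i, j⟩, hij, rfl⟩ := mem_image.1 he
        exact hc i j (mem_offDiag.1 hij).2.2
    _ = (Fintype.card ι).choose 2 * c := by
        rw [sum_const, nsmul_eq_mul, Sym2.card_image_offDiag, card_univ]

theorem stmt_15_general (L d k : ℕ) (hdL : d ≤ L)
    (hne : ((Finset.univ : Finset (Fin L)).powersetCard d).Nonempty) :
    1 - ((k : ℝ) * (k + 1) / 2) * Real.exp (-((d : ℝ) ^ 2) / L)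
      ≤ ((Measure.pi fun _ : Fin k => (PMF.uniformOfFinset _ hne).toMeasure)
          {A : Fin k → Finset (Fin L) | ∀ i j : Fin k, i ≠ j → (A i ∩ A j).Nonempty}).toReal := by
  set μ := Measure.pi fun _ : Fin k => (PMF.uniformOfFinset _ hne).toMeasure
  set bad := ⋃ (i : Fin k) (j) (_ : i ≠ j), {A : Fin k → Finset (Fin L) | Disjoint (A i) (A j)}
  have hgood : {A : Fin k → Finset (Fin L) | ∀ i j : Fin k, i ≠ j → (A i ∩ A j).Nonempty}
      = badᶜ := by
    ext A
    simp [bad, not_disjoint_iff_nonempty_inter]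
  have hbad : μ.real bad ≤ k.choose 2 * (((L - d).choose d : ℝ) / L.choose d) := by
    simpa using measureReal_iUnion_ne_le_choose_two μ _ (fun i j ↦ by simp_rw [disjoint_comm])
      fun i j hij ↦ (measureReal_pi_uniformOfFinset_powersetCard_disjoint hne hij).le
  have hchoose : (k.choose 2 : ℝ) ≤ k * (k + 1) / 2 := by
    rw [Nat.cast_choose_two]
    linarith [(Nat.cast_nonneg k : (0 : ℝ) ≤ k)]
  have hratio : ((L - d).choose d : ℝ) / L.choose d ≤ Real.exp (-((d : ℝ) ^ 2) / L) := by
    simpa [sq] using cast_choose_sub_div_choose_le_exp hdL d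
  rw [← measureReal_def, hgood, probReal_compl_eq_one_sub MeasurableSet.of_discrete]
  gcongr ?_ - ?_
  exact hbad.trans (mul_le_mul hchoose hratio (by positivity) (by positivity))

/-- For `k` independent uniformly random `d`-element subsets of an `L`-element
set, the probability that every pair of them intersects is at least
`1 - (k(k+1)/2)·e^{-d²/L}`. -/
theorem stmt_15 (L d k : ℕ) (hd : 0 < d) (hk : 0 < k) (hdL : d ≤ L)
    (hne : ((Finset.univ : Finset (Fin L)).powersetCard d).Nonempty) :
    1 - ((k : ℝ) * (k + 1) / 2) * Real.exp (-((d : ℝ) ^ 2) / L)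
      ≤ ((Measure.pi fun _ : Fin k => (PMF.uniformOfFinset _ hne).toMeasure)
          {A : Fin k → Finset (Fin L) | ∀ i j : Fin k, i ≠ j → (A i ∩ A j).Nonempty}).toReal :=
  stmt_15_general L d k hdL hne
end
end

section
/- Let L, d, k be positive integers with d ≤ L, and let A_1,…,A_k be independent random sets, each uniformly distributed among all d-element subsets of {0,1,…,L−1}. Then the probability that simultaneously (i) A_i ∩ A_j ≠ ∅ for all 1 ≤ i < j ≤ k and (ii) A_1 ∪ ⋯ ∪ A_k = {0,1,…,L−1} is at least 1 − ((k(k+1)/2)·e^{−d²/L} + L·e^{−dk/L}). -/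
/-!
Union bound. The configuration fails only if `A i ∩ A j = ∅` for one of the `k.choose 2` pairs
`i < j`, or some slot `s` lies in no `A i`. The sets `A i` and `A j` are independent, so the first
event has probability `C(L - d, d) / C(L, d) ≤ (1 - d/L)^d`; the second has probability
`(C(L - 1, d) / C(L, d))^k = (1 - d/L)^k`. Finally `1 - x ≤ e^{-x}`.
-/

open MeasureTheory

noncomputable section

open ProbabilityTheory Finset
open scoped ENNReal

instance (L : ℕ) : DiscreteMeasurableSpace (Finset (Fin L)) := ⟨fun _ => trivial⟩

theorem Nat.descFactorial_mul_pow_le {m n : ℕ} (hmn : m ≤ n) (k : ℕ) :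
    m.descFactorial k * n ^ k ≤ n.descFactorial k * m ^ k := by
  induction k with
  | zero => simp
  | succ k ih =>
    have hstep : (m - k) * n ≤ (n - k) * m := by
      rw [Nat.sub_mul, Nat.sub_mul, mul_comm n m]
      exact Nat.sub_le_sub_left (Nat.mul_le_mul_left k hmn) _
    calc m.descFactorial (k + 1) * n ^ (k + 1)
        = ((m - k) * n) * (m.descFactorial k * n ^ k) := by
          rw [Nat.descFactorial_succ, pow_succ]; ring
      _ ≤ ((n - k) * m) * (n.descFactorial k * m ^ k) := Nat.mul_le_mul hstep ih
      _ = n.descFactorial (k + 1) * m ^ (k + 1) := by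
          rw [Nat.descFactorial_succ, pow_succ]; ring

theorem Nat.choose_mul_pow_le {m n : ℕ} (hmn : m ≤ n) (k : ℕ) :
    m.choose k * n ^ k ≤ n.choose k * m ^ k := by
  have h := Nat.descFactorial_mul_pow_le hmn k
  rw [Nat.descFactorial_eq_factorial_mul_choose, Nat.descFactorial_eq_factorial_mul_choose,
    mul_assoc, mul_assoc] at h
  exact Nat.le_of_mul_le_mul_left h k.factorial_pos

theorem Nat.cast_choose_div_choose_le_div_pow {m n : ℕ} (hmn : m ≤ n) (k : ℕ) :
    (m.choose k : ℝ) / n.choose k ≤ ((m : ℝ) / n) ^ k := by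
  rcases n.eq_zero_or_pos with rfl | hn
  · obtain rfl : m = 0 := by omega
    rcases k with _ | k <;> simp
  refine div_le_of_le_mul₀ (by positivity) (by positivity) ?_
  rw [div_pow, div_mul_eq_mul_div, le_div_iff₀ (by positivity)]
  exact_mod_cast (mul_comm (m ^ k) _ ▸ Nat.choose_mul_pow_le hmn k)

theorem Nat.cast_choose_pred_div_choose {n : ℕ} (hn : 0 < n) (k : ℕ) :
    ((n - 1).choose k : ℝ) / n.choose k = ((n - k : ℕ) : ℝ) / n := by
  obtain ⟨n, rfl⟩ := Nat.exists_eq_add_one_of_ne_zero hn.ne'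
  rcases le_or_gt k (n + 1) with hk | hk
  · rw [div_eq_div_iff (by exact_mod_cast (Nat.choose_pos hk).ne') (by positivity),
      Nat.add_sub_cancel, mul_comm ((n + 1 - k : ℕ) : ℝ)]
    exact_mod_cast Nat.choose_mul_succ_eq n k
  · simp [Nat.choose_eq_zero_of_lt hk, Nat.sub_eq_zero_of_le hk.le]

theorem Nat.cast_sub_div_pow_le_exp {L d : ℕ} (hdL : d ≤ L) (n : ℕ) :
    (((L - d : ℕ) : ℝ) / L) ^ n ≤ Real.exp (-(d * n) / L) := by
  rcases L.eq_zero_or_pos with rfl | hL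
  · obtain rfl : d = 0 := by omega
    rcases n with _ | n <;> simp
  calc (((L - d : ℕ) : ℝ) / L) ^ n = (1 - d / L) ^ n := by
        rw [Nat.cast_sub hdL, sub_div, div_self (by positivity)]
    _ ≤ Real.exp (-(d / L)) ^ n := by
        gcongr
        · exact sub_nonneg.2 (div_le_one_of_le₀ (by exact_mod_cast hdL) (by positivity))
        · exact Real.one_sub_le_exp_neg _
    _ = Real.exp (-(d * n) / L) := by
        rw [← Real.exp_nat_mul]; ring_nf

section UniformSubsets

variable {L d : ℕ} (hne : ((univ : Finset (Fin L)).powersetCard d).Nonempty)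

theorem uniformOfFinset_powersetCard_apply_subset (T : Finset (Fin L)) :
    (PMF.uniformOfFinset _ hne).toMeasure {C | C ⊆ T} = ((#T).choose d : ℝ≥0∞) / L.choose d := by
  rw [PMF.toMeasure_uniformOfFinset_apply _ _ (.of_discrete), card_powersetCard, card_univ,
    Fintype.card_fin, ← card_powersetCard d T]
  congr 3
  ext C
  simp [and_comm]

theorem ae_uniformOfFinset_powersetCard_card_eq :
    ∀ᵐ C ∂(PMF.uniformOfFinset _ hne).toMeasure, #C = d := by
  rw [ae_iff, PMF.toMeasure_apply_eq_zero_iff _ (.of_discrete), PMF.support_uniformOfFinset]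
  exact Set.disjoint_left.2 fun C hC => by simpa using (mem_powersetCard.1 hC).2

variable {ι : Type*} [Fintype ι]

theorem pi_uniformOfFinset_powersetCard_forall_notMem (s : Fin L) :
    (Measure.pi fun _ : ι => (PMF.uniformOfFinset _ hne).toMeasure) {A | ∀ i, s ∉ A i}
      = (((L - 1).choose d : ℝ≥0∞) / L.choose d) ^ Fintype.card ι := by
  have hset : {A : ι → Finset (Fin L) | ∀ i, s ∉ A i}
      = Set.pi Set.univ fun _ => {C | C ⊆ {s}ᶜ} := by
    ext A; simp
  rw [hset, Measure.pi_pi, uniformOfFinset_powersetCard_apply_subset, prod_const, card_univ,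
    card_compl, card_singleton, Fintype.card_fin]

theorem pi_uniformOfFinset_powersetCard_inter_eq_empty {i j : ι} (hij : i ≠ j) :
    (Measure.pi fun _ : ι => (PMF.uniformOfFinset _ hne).toMeasure) {A | A i ∩ A j = ∅}
      = ((L - d).choose d : ℝ≥0∞) / L.choose d := by
  set ν := (PMF.uniformOfFinset _ hne).toMeasure
  set μ := Measure.pi fun _ : ι => ν
  have hindep : IndepFun (fun A : ι → Finset (Fin L) => A i) (fun A => A j) μ :=
    (iIndepFun_pi (X := fun _ => id) fun _ => aemeasurable_id).indepFun hij
  have hmap : μ.map (fun A => (A i, A j)) = ν.prod ν := by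
    rw [hindep.map_prod_eq_prod_map_map (measurable_pi_apply i).aemeasurable
      (measurable_pi_apply j).aemeasurable, (measurePreserving_eval _ i).map_eq,
      (measurePreserving_eval _ j).map_eq]
  have hdisj : ∀ᵐ B ∂ν, ν {C | B ∩ C = ∅} = ((L - d).choose d : ℝ≥0∞) / L.choose d := by
    filter_upwards [ae_uniformOfFinset_powersetCard_card_eq hne] with B hB
    have hset : {C | B ∩ C = ∅} = {C | C ⊆ Bᶜ} := by
      ext C; simp [subset_compl_iff_disjoint_left, disjoint_iff_inter_eq_empty]
    rw [hset, uniformOfFinset_powersetCard_apply_subset, card_compl, Fintype.card_fin, hB]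
  calc μ {A | A i ∩ A j = ∅} = μ.map (fun A => (A i, A j)) {p | p.1 ∩ p.2 = ∅} := by
        rw [Measure.map_apply (by fun_prop) (.of_discrete)]; rfl
    _ = ∫⁻ B, ν {C | B ∩ C = ∅} ∂ν := by rw [hmap, Measure.prod_apply (.of_discrete)]; rfl
    _ = ((L - d).choose d : ℝ≥0∞) / L.choose d := by
        rw [lintegral_congr_ae hdisj, lintegral_const, measure_univ, mul_one]

theorem measureReal_pi_uniformOfFinset_powersetCard_forall_notMem_le (hdL : d ≤ L) (s : Fin L) :
    (Measure.pi fun _ : ι => (PMF.uniformOfFinset _ hne).toMeasure).real {A | ∀ i, s ∉ A i}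
      ≤ Real.exp (-(d * Fintype.card ι) / L) := by
  rw [measureReal_def, pi_uniformOfFinset_powersetCard_forall_notMem, ENNReal.toReal_pow,
    ENNReal.toReal_div, ENNReal.toReal_natCast, ENNReal.toReal_natCast,
    Nat.cast_choose_pred_div_choose s.pos]
  exact Nat.cast_sub_div_pow_le_exp hdL _

theorem measureReal_pi_uniformOfFinset_powersetCard_inter_eq_empty_le (hdL : d ≤ L) {i j : ι}
    (hij : i ≠ j) :
    (Measure.pi fun _ : ι => (PMF.uniformOfFinset _ hne).toMeasure).real {A | A i ∩ A j = ∅}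
      ≤ Real.exp (-(d ^ 2) / L) := by
  rw [measureReal_def, pi_uniformOfFinset_powersetCard_inter_eq_empty hne hij,
    ENNReal.toReal_div, ENNReal.toReal_natCast, ENNReal.toReal_natCast, sq]
  calc ((L - d).choose d : ℝ) / L.choose d ≤ (((L - d : ℕ) : ℝ) / L) ^ d :=
        Nat.cast_choose_div_choose_le_div_pow (Nat.sub_le L d) d
    _ ≤ Real.exp (-(d * d) / L) := Nat.cast_sub_div_pow_le_exp hdL d

end UniformSubsets

theorem compl_setOf_intersecting_and_covering_subset {ι α : Type*} [Fintype ι] [LinearOrder ι]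
    [DecidableEq α] :
    {A : ι → Finset α | (∀ i j, i ≠ j → (A i ∩ A j).Nonempty) ∧ ∀ s, ∃ i, s ∈ A i}ᶜ
      ⊆ (⋃ p ∈ ({p | p.1 < p.2} : Finset (ι × ι)), {A | A p.1 ∩ A p.2 = ∅})
        ∪ ⋃ s, {A | ∀ i, s ∉ A i} := by
  intro A hA
  simp only [Set.mem_compl_iff, Set.mem_ofPred_eq, not_and_or, not_forall, not_exists,
    not_nonempty_iff_eq_empty] at hA
  rcases hA with ⟨i, j, hij, hempty⟩ | ⟨s, hs⟩
  · left
    rcases hij.lt_or_gt with hlt | hgt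
    · exact Set.mem_biUnion (x := (i, j)) (by simpa using hlt) hempty
    · exact Set.mem_biUnion (x := (j, i)) (by simpa using hgt) (by simpa [inter_comm] using hempty)
  · exact Or.inr (Set.mem_iUnion.2 ⟨s, hs⟩)

theorem stmt_17_general (L d k : ℕ) (hdL : d ≤ L)
    (hne : ((Finset.univ : Finset (Fin L)).powersetCard d).Nonempty) :
    1 - (((k : ℝ) * (k + 1) / 2) * Real.exp (-((d : ℝ) ^ 2) / L)
          + (L : ℝ) * Real.exp (-((d : ℝ) * k) / L))
      ≤ ((Measure.pi fun _ : Fin k => (PMF.uniformOfFinset _ hne).toMeasure)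
          {A : Fin k → Finset (Fin L) |
            (∀ i j : Fin k, i ≠ j → (A i ∩ A j).Nonempty) ∧
            (∀ s : Fin L, ∃ i : Fin k, s ∈ A i)}).toReal := by
  set μ := Measure.pi fun _ : Fin k => (PMF.uniformOfFinset _ hne).toMeasure
  set G := {A : Fin k → Finset (Fin L) |
    (∀ i j : Fin k, i ≠ j → (A i ∩ A j).Nonempty) ∧ (∀ s : Fin L, ∃ i : Fin k, s ∈ A i)}
  set Q : Finset (Fin k × Fin k) := {p | p.1 < p.2}
  have hQ : (#Q : ℝ) ≤ k * (k + 1) / 2 := by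
    rw [Fintype.card_product_filter_lt, Fintype.card_fin, Nat.cast_choose_two]
    have : (0 : ℝ) ≤ k := k.cast_nonneg
    linarith
  have hpairs : ∑ p ∈ Q, μ.real {A | A p.1 ∩ A p.2 = ∅}
      ≤ k * (k + 1) / 2 * Real.exp (-(d ^ 2) / L) :=
    calc _ ≤ ∑ _p ∈ Q, Real.exp (-(d ^ 2) / L) := sum_le_sum fun p hp =>
          measureReal_pi_uniformOfFinset_powersetCard_inter_eq_empty_le hne hdL
            (mem_filter.1 hp).2.ne
      _ ≤ _ := by rw [sum_const, nsmul_eq_mul]; gcongr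
  have hslots : ∑ s, μ.real {A | ∀ i, s ∉ A i} ≤ L * Real.exp (-(d * k) / L) :=
    calc _ ≤ ∑ _s : Fin L, Real.exp (-(d * k) / L) := sum_le_sum fun s _ => by
          simpa using
            measureReal_pi_uniformOfFinset_powersetCard_forall_notMem_le (ι := Fin k) hne hdL s
      _ = _ := by simp
  have hunion : μ.real Gᶜ
      ≤ ∑ p ∈ Q, μ.real {A | A p.1 ∩ A p.2 = ∅} + ∑ s, μ.real {A | ∀ i, s ∉ A i} :=
    (measureReal_mono compl_setOf_intersecting_and_covering_subset).trans <|
      (measureReal_union_le _ _).trans <|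
        add_le_add (measureReal_biUnion_finset_le _ _) (measureReal_iUnion_fintype_le _)
  have hG : μ.real G = 1 - μ.real Gᶜ := by
    rw [probReal_compl_eq_one_sub .of_discrete, sub_sub_cancel]
  change _ ≤ μ.real G
  linarith

/-- For `k` independent uniformly random `d`-element subsets of an `L`-element
set of slots, the probability that simultaneously (i) every pair of them intersects and
(ii) every slot is covered by at least one of them is at least
`1 - ((k(k+1)/2)·e^{-d²/L} + L·e^{-dk/L})`. -/
theorem stmt_17 (L d k : ℕ) (hd : 0 < d) (hk : 0 < k) (hdL : d ≤ L)
    (hne : ((Finset.univ : Finset (Fin L)).powersetCard d).Nonempty) :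
    1 - (((k : ℝ) * (k + 1) / 2) * Real.exp (-((d : ℝ) ^ 2) / L)
          + (L : ℝ) * Real.exp (-((d : ℝ) * k) / L))
      ≤ ((Measure.pi fun _ : Fin k => (PMF.uniformOfFinset _ hne).toMeasure)
          {A : Fin k → Finset (Fin L) |
            (∀ i j : Fin k, i ≠ j → (A i ∩ A j).Nonempty) ∧
            (∀ s : Fin L, ∃ i : Fin k, s ∈ A i)}).toReal :=
  stmt_17_general L d k hdL hne
end
end
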